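/- arXiv:1403.7890 — 5 statements merged into one kernel-verified Lean document; each statement's English description precedes it below -/
import Mathlib

section
/- For every real λ with |λ| < 1/4, we have exp(−λ)·(1 − 2λ)^{−1/2} ≤ exp(2λ²). -/
/-- For `|λ| < 1/4`, `exp(−λ)·(1−2λ)^{−1/2} ≤ exp(2λ²)`. -/
theorem stmt_2 (l : ℝ) (hl : |l| < 1 / 4) :
    Real.exp (-l) * (1 - 2 * l) ^ (-(1 / 2) : ℝ) ≤ Real.exp (2 * l ^ 2) := by
  rw [abs_lt] at hl
  have hpos : (0:ℝ) < 1 - 2 * l := by linarith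
  rw [Real.rpow_def_of_pos hpos, ← Real.exp_add, Real.exp_le_exp]
  set x : ℝ := 2 * l + 4 * l ^ 2 with hx
  have hE := Real.exp_pos x
  have hmul : Real.exp (-x) * Real.exp x = 1 := by
    rw [← Real.exp_add]; simp
  have key : 1 ≤ (1 - 2 * l) * Real.exp x := by
    rcases le_or_gt l 0 with h | h
    · have h1 := Real.add_one_le_exp x
      nlinarith
    · have h1 := Real.quadratic_le_exp_of_nonneg (x := x) (by nlinarith)
      nlinarith
  have h2 : Real.exp (-x) ≤ 1 - 2 * l := by
    nlinarith [Real.exp_pos (-x)]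
  have h3 : -x ≤ Real.log (1 - 2 * l) :=
    (Real.le_log_iff_exp_le hpos).mpr h2
  nlinarith
end

section
/- Under the setting of the previous statement, if additionally the μ_k are pairwise distinct and Σ_{k'} max_k π_{k,k'} = 1 (i.e., the error clustering rate is zero and each column of π is supported on a single row), then Σ_{k'} π̃_{k'} μ̃_{k'}² = Σ_k π_k μ_k². -/
open Finset

/-- If the error clustering rate is zero (purity `∑_{k'} max_k π_{k,k'} = 1`) and the
`μ_k` are pairwise distinct, then the Jensen-type inequality is an equality. -/
theorem stmt_8 (K : ℕ) (hK : 0 < K) (π : Fin K → Fin K → ℝ) (μ : Fin K → ℝ)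
    (hnn : ∀ k k', 0 ≤ π k k')
    (hsum : ∑ k, ∑ k', π k k' = 1)
    (hcol : ∀ k', 0 < ∑ k, π k k')
    (hdist : ∀ k k', k ≠ k' → μ k ≠ μ k')
    (hpurity : ∑ k', Finset.univ.sup' ⟨⟨0, hK⟩, Finset.mem_univ _⟩
        (fun k => π k k') = 1) :
    ∑ k', (∑ k, π k k') * ((∑ k, π k k' * μ k) / (∑ k, π k k')) ^ 2 =
      ∑ k, (∑ k', π k k') * μ k ^ 2 := by
  set ne : (univ : Finset (Fin K)).Nonempty := ⟨⟨0, hK⟩, Finset.mem_univ _⟩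
  -- sup' ≤ column sum
  have hle : ∀ k' : Fin K, univ.sup' ne (fun k => π k k') ≤ ∑ k, π k k' := by
    intro k'
    apply Finset.sup'_le
    intro k _
    exact Finset.single_le_sum (fun i _ => hnn i k') (mem_univ k)
  have hsum' : ∑ k' : Fin K, ∑ k, π k k' = 1 := by
    rw [Finset.sum_comm]; exact hsum
  -- each column: sup' = column sum
  have heq : ∀ k' : Fin K, ∑ k, π k k' - univ.sup' ne (fun k => π k k') = 0 := by
    have h0 : ∑ k' : Fin K, (∑ k, π k k' - univ.sup' ne (fun k => π k k')) = 0 := by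
      rw [Finset.sum_sub_distrib, hsum', hpurity]; ring
    intro k'
    have := (Finset.sum_eq_zero_iff_of_nonneg
      (fun i _ => sub_nonneg.2 (hle i))).1 h0 k' (mem_univ k')
    exact this
  -- main per-column computation
  have hcolterm : ∀ k' : Fin K,
      (∑ k, π k k') * ((∑ k, π k k' * μ k) / (∑ k, π k k')) ^ 2
        = ∑ k, π k k' * μ k ^ 2 := by
    intro k'
    obtain ⟨k0, _, hk0⟩ := Finset.exists_mem_eq_sup' ne (fun k => π k k')
    have hzero : ∀ k, k ≠ k0 → π k k' = 0 := by
      have hrest : ∑ k ∈ univ.erase k0, π k k' = 0 := by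
        have := heq k'
        rw [hk0] at this
        have hsplit : ∑ k, π k k' = π k0 k' + ∑ k ∈ univ.erase k0, π k k' :=
          (Finset.add_sum_erase univ (fun k => π k k') (mem_univ k0)).symm
        linarith
      intro k hk
      exact (Finset.sum_eq_zero_iff_of_nonneg (fun i _ => hnn i k')).1 hrest k
        (Finset.mem_erase.2 ⟨hk, mem_univ k⟩)
    have h1 : ∑ k, π k k' = π k0 k' := by
      apply Finset.sum_eq_single
      · intro b _ hb; exact hzero b hb
      · intro h; exact absurd (mem_univ k0) h
    have h2 : ∑ k, π k k' * μ k = π k0 k' * μ k0 := by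
      apply Finset.sum_eq_single
      · intro b _ hb; rw [hzero b hb]; ring
      · intro h; exact absurd (mem_univ k0) h
    have h3 : ∑ k, π k k' * μ k ^ 2 = π k0 k' * μ k0 ^ 2 := by
      apply Finset.sum_eq_single
      · intro b _ hb; rw [hzero b hb]; ring
      · intro h; exact absurd (mem_univ k0) h
    have hpos : (0:ℝ) < π k0 k' := h1 ▸ hcol k'
    rw [h1, h2, h3]
    field_simp
  calc ∑ k', (∑ k, π k k') * ((∑ k, π k k' * μ k) / (∑ k, π k k')) ^ 2
      = ∑ k' : Fin K, ∑ k, π k k' * μ k ^ 2 := by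
        exact Finset.sum_congr rfl (fun k' _ => hcolterm k')
    _ = ∑ k, (∑ k', π k k') * μ k ^ 2 := by
        rw [Finset.sum_comm]
        exact Finset.sum_congr rfl (fun k _ => (Finset.sum_mul _ _ _).symm)
end

section
/- Under the setting of the paper's mixture model, if the μ_k are pairwise distinct and 1 − Σ_{k'} max_k π_{k,k'} > 0 (i.e., strictly positive error clustering rate), then the strict inequality Σ_{k'} π̃_{k'} μ̃_{k'}² < Σ_k π_k μ_k² holds. -/
open Finset

/-!
Column by column, `π̃ μ̃²` is the weighted second moment `∑ π μ²` of the column minus its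
weighted variance `∑ π (μ - μ̃)²`. Variances are nonnegative, and a positive error rate forces
some column to have two positive entries; as the `μ_k` are distinct, that column has positive
variance.
-/

section WeightedMean

variable {ι : Type*} {s : Finset ι} {w x : ι → ℝ}

theorem sum_mul_sq_eq_mul_weightedMean_sq_add (hw : ∑ i ∈ s, w i ≠ 0) :
    ∑ i ∈ s, w i * x i ^ 2 =
      (∑ i ∈ s, w i) * ((∑ i ∈ s, w i * x i) / ∑ i ∈ s, w i) ^ 2 +
        ∑ i ∈ s, w i * (x i - (∑ i ∈ s, w i * x i) / ∑ i ∈ s, w i) ^ 2 := by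
  set m := (∑ i ∈ s, w i * x i) / ∑ i ∈ s, w i with hm
  have hexpand : ∑ i ∈ s, w i * (x i - m) ^ 2 =
      ∑ i ∈ s, w i * x i ^ 2 - 2 * m * ∑ i ∈ s, w i * x i + m ^ 2 * ∑ i ∈ s, w i := by
    simp only [mul_sum, ← sum_sub_distrib, ← sum_add_distrib]
    exact sum_congr rfl fun i _ => by ring
  rw [hexpand, hm]
  field_simp
  ring

theorem sum_mul_sq_sub_pos (hw : ∀ i ∈ s, 0 ≤ w i) {i j : ι} (hi : i ∈ s) (hj : j ∈ s)
    (hwi : 0 < w i) (hwj : 0 < w j) (hx : x i ≠ x j) (c : ℝ) :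
    0 < ∑ k ∈ s, w k * (x k - c) ^ 2 := by
  have hterm : ∀ k ∈ s, 0 < w k → x k ≠ c → 0 < ∑ k ∈ s, w k * (x k - c) ^ 2 :=
    fun k hk hwk hxk => (mul_pos hwk (sq_pos_of_ne_zero (sub_ne_zero.mpr hxk))).trans_le <|
      single_le_sum (f := fun k => w k * (x k - c) ^ 2)
        (fun k hk => mul_nonneg (hw k hk) (sq_nonneg _)) hk
  by_cases hxi : x i = c
  · exact hterm j hj hwj (hxi ▸ hx.symm)
  · exact hterm i hi hwi hxi

theorem mul_weightedMean_sq_le (hw : ∀ i ∈ s, 0 ≤ w i) :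
    (∑ i ∈ s, w i) * ((∑ i ∈ s, w i * x i) / ∑ i ∈ s, w i) ^ 2 ≤ ∑ i ∈ s, w i * x i ^ 2 := by
  by_cases hW : ∑ i ∈ s, w i = 0
  · rw [hW, zero_mul]
    exact sum_nonneg fun i hi => mul_nonneg (hw i hi) (sq_nonneg _)
  · rw [sum_mul_sq_eq_mul_weightedMean_sq_add hW, le_add_iff_nonneg_right]
    exact sum_nonneg fun i hi => mul_nonneg (hw i hi) (sq_nonneg _)

theorem mul_weightedMean_sq_lt (hw : ∀ i ∈ s, 0 ≤ w i) {i j : ι} (hi : i ∈ s) (hj : j ∈ s)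
    (hwi : 0 < w i) (hwj : 0 < w j) (hx : x i ≠ x j) :
    (∑ i ∈ s, w i) * ((∑ i ∈ s, w i * x i) / ∑ i ∈ s, w i) ^ 2 < ∑ i ∈ s, w i * x i ^ 2 := by
  have hW : 0 < ∑ i ∈ s, w i := hwi.trans_le (single_le_sum hw hi)
  rw [sum_mul_sq_eq_mul_weightedMean_sq_add hW.ne', lt_add_iff_pos_right]
  exact sum_mul_sq_sub_pos hw hi hj hwi hwj hx _

end WeightedMean

theorem Finset.exists_two_pos_of_sup'_lt_sum {ι : Type*} {s : Finset ι} (hs : s.Nonempty)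
    {f : ι → ℝ} (h : s.sup' hs f < ∑ i ∈ s, f i) :
    ∃ i ∈ s, ∃ j ∈ s, i ≠ j ∧ 0 < f i ∧ 0 < f j := by
  classical
  obtain ⟨i, hi, hmax⟩ := exists_mem_eq_sup' hs f
  have hrest : ∑ j ∈ s.erase i, (0 : ℝ) < ∑ j ∈ s.erase i, f j := by
    rw [← add_sum_erase s f hi, ← hmax] at h
    simpa using h
  obtain ⟨j, hj, hfj⟩ := exists_lt_of_sum_lt hrest
  have hfi : 0 < f i := hmax ▸ hfj.trans_le (le_sup' f (mem_of_mem_erase hj))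
  exact ⟨i, hi, j, mem_of_mem_erase hj, (ne_of_mem_erase hj).symm, hfi, hfj⟩

theorem stmt_9_general (K : ℕ) (hK : 0 < K) (π : Fin K → Fin K → ℝ) (μ : Fin K → ℝ)
    (hnn : ∀ k k', 0 ≤ π k k')
    (hsum : ∑ k, ∑ k', π k k' = 1)
    (hdist : ∀ k k', k ≠ k' → μ k ≠ μ k')
    (hecr : 0 < 1 - ∑ k', Finset.univ.sup' ⟨⟨0, hK⟩, Finset.mem_univ _⟩
        (fun k => π k k')) :
    ∑ k', (∑ k, π k k') * ((∑ k, π k k' * μ k) / (∑ k, π k k')) ^ 2 <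
      ∑ k, (∑ k', π k k') * μ k ^ 2 := by
  have hcolumns : ∑ k', univ.sup' ⟨⟨0, hK⟩, mem_univ _⟩ (fun k => π k k') <
      ∑ k', ∑ k, π k k' := by
    rw [sum_comm, hsum]
    linarith
  obtain ⟨c, -, hc⟩ := exists_lt_of_sum_lt hcolumns
  obtain ⟨k₀, -, k₁, -, hk, hk₀, hk₁⟩ := exists_two_pos_of_sup'_lt_sum _ hc
  have hmoment : ∑ k, (∑ k', π k k') * μ k ^ 2 = ∑ k', ∑ k, π k k' * μ k ^ 2 := by
    simp only [sum_mul]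
    exact sum_comm
  rw [hmoment]
  exact sum_lt_sum (fun k' _ => mul_weightedMean_sq_le fun k _ => hnn k k')
    ⟨c, mem_univ c, mul_weightedMean_sq_lt (fun k _ => hnn k c) (mem_univ k₀) (mem_univ k₁)
      hk₀ hk₁ (hdist k₀ k₁ hk)⟩

/-- If the error clustering rate is strictly positive (purity `< 1`) and the `μ_k` are
pairwise distinct, then the Jensen-type inequality is strict. -/
theorem stmt_9 (K : ℕ) (hK : 0 < K) (π : Fin K → Fin K → ℝ) (μ : Fin K → ℝ)
    (hnn : ∀ k k', 0 ≤ π k k')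
    (hsum : ∑ k, ∑ k', π k k' = 1)
    (hrow : ∀ k, 0 < ∑ k', π k k')
    (hcol : ∀ k', 0 < ∑ k, π k k')
    (hdist : ∀ k k', k ≠ k' → μ k ≠ μ k')
    (hecr : 0 < 1 - ∑ k', Finset.univ.sup' ⟨⟨0, hK⟩, Finset.mem_univ _⟩
        (fun k => π k k')) :
    ∑ k', (∑ k, π k k') * ((∑ k, π k k' * μ k) / (∑ k, π k k')) ^ 2 <
      ∑ k, (∑ k', π k k') * μ k ^ 2 :=
  stmt_9_general K hK π μ hnn hsum hdist hecr
end

section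
/- (Noise features are noise) In the Gaussian mixture setting where x_{ij} are independent with variance 1 and mean μ_{ij} = 0 for all i whenever j > p*, for every noise feature j > p* and every partition C of {1,...,n}, the expected BCSS satisfies E[a_j(C)] = K − 1, where K is the number of clusters in C. -/
open MeasureTheory ProbabilityTheory Finset

/-! Expanding the square, independence kills the cross terms, so `E[(∑_{i ∈ S} x_i)²] = |S|`
for every index set `S`. Hence each cluster term of `a(C)` has expectation `|C_k| / |C_k| = 1`
and the grand-mean term has expectation `n / n = 1`, giving `K − 1`. -/

section

variable {Ω ι : Type*} [MeasurableSpace Ω] {P : Measure Ω} {x : ι → Ω → ℝ}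

theorem integral_mul_eq_ite_of_pairwise_indepFun [DecidableEq ι]
    (hL2 : ∀ i, MemLp (x i) 2 P) (hindep : Pairwise fun i j => IndepFun (x i) (x j) P)
    (hmean : ∀ i, ∫ ω, x i ω ∂P = 0) (hvar : ∀ i, ∫ ω, (x i ω) ^ 2 ∂P = 1) (i j : ι) :
    ∫ ω, x i ω * x j ω ∂P = if i = j then 1 else 0 := by
  split_ifs with hij
  · subst hij
    simpa [sq] using hvar i
  · have h := (hindep hij).integral_mul_eq_mul_integral (hL2 i).aestronglyMeasurable
      (hL2 j).aestronglyMeasurable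
    simpa [hmean] using h

theorem integral_sum_sq_eq_card_of_pairwise_indepFun
    (hL2 : ∀ i, MemLp (x i) 2 P) (hindep : Pairwise fun i j => IndepFun (x i) (x j) P)
    (hmean : ∀ i, ∫ ω, x i ω ∂P = 0) (hvar : ∀ i, ∫ ω, (x i ω) ^ 2 ∂P = 1) (S : Finset ι) :
    ∫ ω, (∑ i ∈ S, x i ω) ^ 2 ∂P = #S := by
  classical
  have hmul : ∀ i j, Integrable (fun ω => x i ω * x j ω) P :=
    fun i j => (hL2 i).integrable_mul (hL2 j)
  simp_rw [sq, sum_mul_sum]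
  rw [integral_finsetSum _ fun i _ => integrable_finsetSum _ fun j _ => hmul i j]
  simp_rw [integral_finsetSum _ fun j _ => hmul _ j,
    integral_mul_eq_ite_of_pairwise_indepFun hL2 hindep hmean hvar]
  simp

end

theorem stmt_11_general {Ω : Type*} [MeasurableSpace Ω] (P : Measure Ω) [IsProbabilityMeasure P]
    (n K : ℕ) (hn : 0 < n) (x : Fin n → Ω → ℝ)
    (hL2 : ∀ i, MemLp (x i) 2 P)
    (hindep : iIndepFun x P)
    (hmean : ∀ i, ∫ ω, x i ω ∂P = 0)
    (hvar : ∀ i, ∫ ω, (x i ω) ^ 2 ∂P = 1)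
    (C : Fin K → Finset (Fin n))
    (hne : ∀ k, (C k).Nonempty) :
    ∫ ω, (∑ k, (∑ i ∈ C k, x i ω) ^ 2 / ((C k).card : ℝ) -
        (∑ i, x i ω) ^ 2 / (n : ℝ)) ∂P = K - 1 := by
  have hsq : ∀ S : Finset (Fin n), ∫ ω, (∑ i ∈ S, x i ω) ^ 2 ∂P = #S :=
    integral_sum_sq_eq_card_of_pairwise_indepFun hL2 (fun i j h => hindep.indepFun h) hmean hvar
  have hint : ∀ (S : Finset (Fin n)) (c : ℝ),
      Integrable (fun ω => (∑ i ∈ S, x i ω) ^ 2 / c) P :=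
    fun S c => ((memLp_finsetSum S fun i _ => hL2 i).integrable_sq).div_const c
  rw [integral_sub (integrable_finsetSum _ fun k _ => hint _ _) (hint _ _),
    integral_finsetSum _ fun k _ => hint _ _]
  simp_rw [integral_div, hsq]
  have hcard : ∀ k, (#(C k) : ℝ) ≠ 0 := fun k => by exact_mod_cast (hne k).card_ne_zero
  simp [div_self (hcard _), hn.ne']

/-- Noise features are noise: if the `x_i` are independent with mean `0` and variance
`1`, then for every partition into `K` nonempty clusters, `E[a(C)] = K − 1`. -/
theorem stmt_11 {Ω : Type*} [MeasurableSpace Ω] (P : Measure Ω) [IsProbabilityMeasure P]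
    (n K : ℕ) (hn : 0 < n) (x : Fin n → Ω → ℝ)
    (hmeas : ∀ i, Measurable (x i))
    (hL2 : ∀ i, MemLp (x i) 2 P)
    (hindep : iIndepFun x P)
    (hmean : ∀ i, ∫ ω, x i ω ∂P = 0)
    (hvar : ∀ i, ∫ ω, (x i ω) ^ 2 ∂P = 1)
    (C : Fin K → Finset (Fin n))
    (hne : ∀ k, (C k).Nonempty)
    (hdisj : ∀ k k', k ≠ k' → Disjoint (C k) (C k'))
    (hcover : ∀ i : Fin n, ∃ k, i ∈ C k) :
    ∫ ω, (∑ k, (∑ i ∈ C k, x i ω) ^ 2 / ((C k).card : ℝ) -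
        (∑ i, x i ω) ^ 2 / (n : ℝ)) ∂P = K - 1 :=
  stmt_11_general P n K hn x hL2 hindep hmean hvar C hne
end

section
/- (Optimality of the natural partition) In the mixture setting with pairwise distinct cluster means μ_k and positive proportions π_k, for every relevant feature j ≤ p* and every partition C̃ of {1,...,n} into K nonempty clusters, E[a_j(C̃)] ≤ E[a_j(C*)], where C* is the natural partition. Consequently, C* maximizes Σ_{j=1}^p E[a_j(C)] over all K-partitions C. -/
open MeasureTheory ProbabilityTheory Finset

/-!
For independent observations of unit variance, the expected between-cluster sum of squares of a
partition `C` into `K` nonempty clusters is `∑ₖ (∑_{i ∈ Cₖ} mᵢ)² / |Cₖ| + K` minus a term that does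
not depend on `C`, where `mᵢ` are the means. By Cauchy–Schwarz on each cluster the first sum is
at most `∑ᵢ mᵢ²`, with equality as soon as the means are constant on every cluster, which is the
case for the natural partition.
-/

lemma sq_sum_div_card_le_sum_sq {ι : Type*} (s : Finset ι) (f : ι → ℝ) :
    (∑ i ∈ s, f i) ^ 2 / #s ≤ ∑ i ∈ s, f i ^ 2 := by
  obtain rfl | hs := s.eq_empty_or_nonempty
  · simp
  rw [div_le_iff₀' (by positivity)]
  exact sq_sum_le_card_mul_sum_sq

lemma sq_sum_div_card_eq_sum_sq_of_forall_eq {ι : Type*} {s : Finset ι} {f : ι → ℝ} {c : ℝ}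
    (hf : ∀ i ∈ s, f i = c) : (∑ i ∈ s, f i) ^ 2 / #s = ∑ i ∈ s, f i ^ 2 := by
  have hf2 : ∀ i ∈ s, f i ^ 2 = c ^ 2 := fun i hi => by rw [hf i hi]
  rw [sum_congr rfl hf, sum_congr rfl hf2, sum_const, sum_const, nsmul_eq_mul, nsmul_eq_mul]
  obtain rfl | hs := s.eq_empty_or_nonempty
  · simp
  field_simp

section Partition

variable {ι κ : Type*} [Fintype ι] [Fintype κ]

lemma sum_sq_sum_div_card_le_sum_sq {C : κ → Finset ι}
    (hdisj : Pairwise fun k k' => Disjoint (C k) (C k')) (hcover : ∀ i, ∃ k, i ∈ C k) (m : ι → ℝ) :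
    ∑ k, (∑ i ∈ C k, m i) ^ 2 / #(C k) ≤ ∑ i, m i ^ 2 := by
  classical
  have hunion : univ.biUnion C = univ :=
    eq_univ_of_forall fun i => mem_biUnion.2 <| (hcover i).imp fun k hk => ⟨mem_univ k, hk⟩
  calc ∑ k, (∑ i ∈ C k, m i) ^ 2 / #(C k)
      ≤ ∑ k, ∑ i ∈ C k, m i ^ 2 := sum_le_sum fun k _ => sq_sum_div_card_le_sum_sq _ _
    _ = ∑ i, m i ^ 2 := by
      rw [← sum_biUnion (hdisj.set_pairwise _), hunion]

lemma sum_sq_sum_fiber_div_card [DecidableEq κ] (g : ι → κ) (c : κ → ℝ) :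
    ∑ k, (∑ i with g i = k, c (g i)) ^ 2 / #{i | g i = k} = ∑ i, c (g i) ^ 2 := by
  rw [← sum_fiberwise univ g fun i => c (g i) ^ 2]
  exact sum_congr rfl fun k _ =>
    sq_sum_div_card_eq_sum_sq_of_forall_eq fun i hi => by rw [(mem_filter.1 hi).2]

end Partition

section Moments

variable {Ω ι : Type*} [MeasurableSpace Ω] {P : Measure Ω} [IsProbabilityMeasure P]
  {X : ι → Ω → ℝ}

lemma integral_sq_sum_eq (s : Finset ι) (hX : ∀ i ∈ s, MemLp (X i) 2 P)
    (hindep : Set.Pairwise s fun i j => IndepFun (X i) (X j) P) :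
    ∫ ω, (∑ i ∈ s, X i ω) ^ 2 ∂P =
      (∑ i ∈ s, ∫ ω, X i ω ∂P) ^ 2 + ∑ i ∈ s, variance (X i) P := by
  have hsum : MemLp (∑ i ∈ s, X i) 2 P := memLp_finsetSum' s hX
  rw [← IndepFun.variance_sum hX hindep, variance_eq_sub hsum]
  simp only [Pi.pow_apply, Finset.sum_apply]
  rw [integral_finsetSum s fun i hi => (hX i hi).integrable one_le_two]
  ring

variable [Fintype ι] {κ : Type*} [Fintype κ]

noncomputable def betweenSS (C : κ → Finset ι) (y : ι → ℝ) : ℝ :=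
  ∑ k, (∑ i ∈ C k, y i) ^ 2 / #(C k) - (∑ i, y i) ^ 2 / Fintype.card ι

lemma integral_betweenSS (hX : ∀ i, MemLp (X i) 2 P)
    (hindep : Pairwise fun i j => IndepFun (X i) (X j) P) (hvar : ∀ i, variance (X i) P = 1)
    {C : κ → Finset ι} (hC : ∀ k, (C k).Nonempty) :
    ∫ ω, betweenSS C (X · ω) ∂P =
      ∑ k, (∑ i ∈ C k, ∫ ω, X i ω ∂P) ^ 2 / #(C k) + Fintype.card κ -
        ((∑ i, ∫ ω, X i ω ∂P) ^ 2 + Fintype.card ι) / Fintype.card ι := by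
  have hsq (s : Finset ι) :
      ∫ ω, (∑ i ∈ s, X i ω) ^ 2 ∂P = (∑ i ∈ s, ∫ ω, X i ω ∂P) ^ 2 + #s := by
    rw [integral_sq_sum_eq s (fun i _ => hX i) (hindep.set_pairwise _)]
    simp [hvar]
  have hint (s : Finset ι) : Integrable (fun ω => (∑ i ∈ s, X i ω) ^ 2) P :=
    (memLp_finsetSum s fun i _ => hX i).integrable_sq
  have hcluster (k : κ) :
      ∫ ω, (∑ i ∈ C k, X i ω) ^ 2 / #(C k) ∂P =
        (∑ i ∈ C k, ∫ ω, X i ω ∂P) ^ 2 / #(C k) + 1 := by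
    have : (#(C k) : ℝ) ≠ 0 := by simpa using (hC k).card_pos.ne'
    rw [integral_div, hsq, add_div, div_self this]
  unfold betweenSS
  rw [integral_sub (integrable_finsetSum _ fun k _ => (hint _).div_const _)
      ((hint _).div_const _), integral_finsetSum _ fun k _ => (hint _).div_const _,
    integral_div, hsq]
  simp only [hcluster, sum_add_distrib, sum_const, card_univ, nsmul_eq_mul, mul_one]

theorem integral_betweenSS_le_fiber (hX : ∀ i, MemLp (X i) 2 P)
    (hindep : Pairwise fun i j => IndepFun (X i) (X j) P) (hvar : ∀ i, variance (X i) P = 1)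
    [DecidableEq κ] {g : ι → κ} (hg : Function.Surjective g) {c : κ → ℝ}
    (hmean : ∀ i, ∫ ω, X i ω ∂P = c (g i)) {C : κ → Finset ι} (hC : ∀ k, (C k).Nonempty)
    (hdisj : Pairwise fun k k' => Disjoint (C k) (C k')) (hcover : ∀ i, ∃ k, i ∈ C k) :
    ∫ ω, betweenSS C (X · ω) ∂P ≤ ∫ ω, betweenSS (fun k => {i | g i = k}) (X · ω) ∂P := by
  have hfiber (k : κ) : ({i | g i = k} : Finset ι).Nonempty :=
    (hg k).imp fun i hi => by simpa using hi
  rw [integral_betweenSS hX hindep hvar hC, integral_betweenSS hX hindep hvar hfiber]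
  simp only [hmean, sum_sq_sum_fiber_div_card]
  linarith [sum_sq_sum_div_card_le_sum_sq hdisj hcover fun i => c (g i)]

end Moments

theorem stmt_13_general {Ω : Type*} [MeasurableSpace Ω] (P : Measure Ω) [IsProbabilityMeasure P]
    (n p pstar K : ℕ)
    (x : Fin p → Fin n → Ω → ℝ)
    (g : Fin n → Fin K) (hg : Function.Surjective g)
    (ν : Fin p → Fin K → ℝ)
    (hL2 : ∀ j i, MemLp (x j i) 2 P)
    (hindep : iIndepFun (fun q : Fin p × Fin n => x q.1 q.2) P)
    (hmean : ∀ j i, ∫ ω, x j i ω ∂P = if (j : ℕ) < pstar then ν j (g i) else 0)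
    (hvar : ∀ j i, ∫ ω, (x j i ω - ∫ ω', x j i ω' ∂P) ^ 2 ∂P = 1)
    (Ctil : Fin K → Finset (Fin n))
    (hne : ∀ k, (Ctil k).Nonempty)
    (hdisj : ∀ k k', k ≠ k' → Disjoint (Ctil k) (Ctil k'))
    (hcover : ∀ i : Fin n, ∃ k, i ∈ Ctil k) :
    (∀ j : Fin p, (j : ℕ) < pstar →
      ∫ ω, (∑ k, (∑ i ∈ Ctil k, x j i ω) ^ 2 / ((Ctil k).card : ℝ) -
          (∑ i, x j i ω) ^ 2 / (n : ℝ)) ∂P ≤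
      ∫ ω, (∑ k, (∑ i ∈ Finset.univ.filter (fun i => g i = k), x j i ω) ^ 2 /
            ((Finset.univ.filter (fun i => g i = k)).card : ℝ) -
          (∑ i, x j i ω) ^ 2 / (n : ℝ)) ∂P) ∧
    (∑ j, ∫ ω, (∑ k, (∑ i ∈ Ctil k, x j i ω) ^ 2 / ((Ctil k).card : ℝ) -
          (∑ i, x j i ω) ^ 2 / (n : ℝ)) ∂P ≤
      ∑ j, ∫ ω, (∑ k, (∑ i ∈ Finset.univ.filter (fun i => g i = k), x j i ω) ^ 2 /
            ((Finset.univ.filter (fun i => g i = k)).card : ℝ) -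
          (∑ i, x j i ω) ^ 2 / (n : ℝ)) ∂P) := by
  have key (j : Fin p) :
      ∫ ω, betweenSS Ctil (x j · ω) ∂P ≤
        ∫ ω, betweenSS (fun k => {i | g i = k}) (x j · ω) ∂P := by
    have hpair : Pairwise fun i i' => IndepFun (x j i) (x j i') P := fun i i' hii =>
      hindep.indepFun (i := (j, i)) (j := (j, i')) (by simpa using hii)
    have hunit (i : Fin n) : variance (x j i) P = 1 := by
      rw [variance_eq_integral (hL2 j i).aestronglyMeasurable.aemeasurable, hvar]
    exact integral_betweenSS_le_fiber (hL2 j) hpair hunit hg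
      (c := fun k => if (j : ℕ) < pstar then ν j k else 0) (hmean j) hne hdisj hcover
  simp only [betweenSS, Fintype.card_fin] at key
  exact ⟨fun j _ => key j, sum_le_sum fun j _ => key j⟩

/-- Optimality of the natural partition: in the mixture model, for every relevant
feature the expected BCSS of any `K`-partition is at most that of the natural
partition, and consequently the natural partition maximizes the total expected BCSS. -/
theorem stmt_13 {Ω : Type*} [MeasurableSpace Ω] (P : Measure Ω) [IsProbabilityMeasure P]
    (n p pstar K : ℕ) (hn : 0 < n) (hp : pstar ≤ p)
    (x : Fin p → Fin n → Ω → ℝ)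
    (g : Fin n → Fin K) (hg : Function.Surjective g)
    (ν : Fin p → Fin K → ℝ)
    (hmeas : ∀ j i, Measurable (x j i))
    (hL2 : ∀ j i, MemLp (x j i) 2 P)
    (hindep : iIndepFun (fun q : Fin p × Fin n => x q.1 q.2) P)
    (hmean : ∀ j i, ∫ ω, x j i ω ∂P = if (j : ℕ) < pstar then ν j (g i) else 0)
    (hvar : ∀ j i, ∫ ω, (x j i ω - ∫ ω', x j i ω' ∂P) ^ 2 ∂P = 1)
    (hdist : ∀ j : Fin p, (j : ℕ) < pstar → ∀ k k', k ≠ k' → ν j k ≠ ν j k')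
    (Ctil : Fin K → Finset (Fin n))
    (hne : ∀ k, (Ctil k).Nonempty)
    (hdisj : ∀ k k', k ≠ k' → Disjoint (Ctil k) (Ctil k'))
    (hcover : ∀ i : Fin n, ∃ k, i ∈ Ctil k) :
    (∀ j : Fin p, (j : ℕ) < pstar →
      ∫ ω, (∑ k, (∑ i ∈ Ctil k, x j i ω) ^ 2 / ((Ctil k).card : ℝ) -
          (∑ i, x j i ω) ^ 2 / (n : ℝ)) ∂P ≤
      ∫ ω, (∑ k, (∑ i ∈ Finset.univ.filter (fun i => g i = k), x j i ω) ^ 2 /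
            ((Finset.univ.filter (fun i => g i = k)).card : ℝ) -
          (∑ i, x j i ω) ^ 2 / (n : ℝ)) ∂P) ∧
    (∑ j, ∫ ω, (∑ k, (∑ i ∈ Ctil k, x j i ω) ^ 2 / ((Ctil k).card : ℝ) -
          (∑ i, x j i ω) ^ 2 / (n : ℝ)) ∂P ≤
      ∑ j, ∫ ω, (∑ k, (∑ i ∈ Finset.univ.filter (fun i => g i = k), x j i ω) ^ 2 /
            ((Finset.univ.filter (fun i => g i = k)).card : ℝ) -
          (∑ i, x j i ω) ^ 2 / (n : ℝ)) ∂P) :=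
  stmt_13_general P n p pstar K x g hg ν hL2 hindep hmean hvar Ctil hne hdisj hcover
end
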